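/- arXiv:1310.7514 — 4 statements merged into one kernel-verified Lean document; each statement's English description precedes it below -/
import Mathlib

section
/- For all a, b, c, d : Fin p → ZMod 2, the Pauli spinors obey the sign-commutation relation σ(a,b) * σ(c,d) = (-1)^(ω((a,b),(c,d))) • (σ(c,d) * σ(a,b)), where ω((a,b),(c,d)) = a⬝d + b⬝c; in particular any two Pauli spinors either commute or anticommute. -/
open Matrix BigOperators

/-- The mod-2 dot product of two bitstrings. -/
def dotp {p : ℕ} (a b : Fin p → ZMod 2) : ZMod 2 := ∑ i, a i * b i

/-- The sign `(-1)^t` for `t : ZMod 2`. -/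
noncomputable def sgn (t : ZMod 2) : ℂ := (-1 : ℂ) ^ t.val

/-- The Pauli spinor matrix `σ(a,b)`, representing `⊗ᵢ X^(a i) Z^(b i)`:
`σ(a,b) x y = (-1)^(b⬝x)` if `y = x + a` and `0` otherwise. -/
noncomputable def pauli {p : ℕ} (a b : Fin p → ZMod 2) :
    Matrix (Fin p → ZMod 2) (Fin p → ZMod 2) ℂ :=
  fun x y => if y = x + a then sgn (dotp b x) else 0

/-- The symplectic form `ω((a,b),(c,d)) = a⬝d + b⬝c` on pairs of bitstrings. -/
def omegaF {p : ℕ} (u v : (Fin p → ZMod 2) × (Fin p → ZMod 2)) : ZMod 2 :=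
  dotp u.1 v.2 + dotp u.2 v.1

/-- A subspace is isotropic if `ω` vanishes on all pairs of its elements. -/
def IsIsotropic {p : ℕ}
    (V : Submodule (ZMod 2) ((Fin p → ZMod 2) × (Fin p → ZMod 2))) : Prop :=
  ∀ u ∈ V, ∀ v ∈ V, omegaF u v = 0

/-- A maximal isotropic subspace: isotropic and not properly contained in any
isotropic subspace. -/
def IsMaxIsotropic {p : ℕ}
    (V : Submodule (ZMod 2) ((Fin p → ZMod 2) × (Fin p → ZMod 2))) : Prop :=
  IsIsotropic V ∧ ∀ W, IsIsotropic W → V ≤ W → W = V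

/-! The phase `(-1)^(d⬝(x+a))` that `σ(c,d)` picks up after `σ(a,b)` has shifted `x` to `x + a`
splits off the constant `(-1)^(d⬝a)`, so `σ(a,b)σ(c,d) = (-1)^(d⬝a) σ(a+c, b+d)`. In the other order
the constant is `(-1)^(b⬝c)`, and over `ZMod 2` the two differ by `(-1)^(a⬝d + b⬝c)`. -/

lemma sgn_add (s t : ZMod 2) : sgn (s + t) = sgn s * sgn t := by
  rw [sgn, sgn, sgn, ZMod.val_add, ← neg_one_pow_eq_pow_mod_two, pow_add]

lemma sgn_add_self (s t : ZMod 2) : sgn (s + t + t) = sgn s := by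
  rw [add_assoc, CharTwo.add_self_eq_zero, add_zero]

lemma dotp_eq_dotProduct {p : ℕ} (a b : Fin p → ZMod 2) : dotp a b = a ⬝ᵥ b := rfl

lemma pauli_mul_pauli {p : ℕ} (a b c d : Fin p → ZMod 2) :
    pauli a b * pauli c d = sgn (dotp d a) • pauli (a + c) (b + d) := by
  ext x y
  have hsign : sgn (dotp b x) * sgn (dotp d (x + a)) = sgn (dotp d a) * sgn (dotp (b + d) x) := by
    simp only [dotp_eq_dotProduct, dotProduct_add, add_dotProduct, ← sgn_add]
    congr 1
    ring
  simp only [mul_apply, Matrix.smul_apply, pauli, ite_mul, mul_ite, zero_mul, mul_zero,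
    ← add_assoc, smul_eq_mul]
  rw [Finset.sum_eq_single (x + a) (fun z _ hz => by simp [hz]) (by simp)]
  simp only [↓reduceIte, hsign]

theorem pauli_sign_comm_general {p : ℕ} (a b c d : Fin p → ZMod 2) :
    pauli a b * pauli c d = sgn (omegaF (a, b) (c, d)) • (pauli c d * pauli a b) := by
  rw [pauli_mul_pauli, pauli_mul_pauli, smul_smul, ← sgn_add, add_comm c, add_comm d, omegaF,
    dotp_eq_dotProduct, dotp_eq_dotProduct, dotp_eq_dotProduct, dotProduct_comm b, dotProduct_comm d,
    sgn_add_self]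

/-- The Pauli spinors obey the sign-commutation relation
`σ(a,b) * σ(c,d) = (-1)^(ω((a,b),(c,d))) • (σ(c,d) * σ(a,b))` with
`ω((a,b),(c,d)) = a⬝d + b⬝c`; in particular any two Pauli spinors either commute or
anticommute. -/
theorem pauli_sign_comm {p : ℕ} (hp : 1 ≤ p) (a b c d : Fin p → ZMod 2) :
    pauli a b * pauli c d = sgn (omegaF (a, b) (c, d)) • (pauli c d * pauli a b) :=
  pauli_sign_comm_general a b c d
end

section
/- For all a, b, c, d : Fin p → ZMod 2, the Pauli spinors σ(a,b) and σ(c,d) commute (σ(a,b) * σ(c,d) = σ(c,d) * σ(a,b)) if and only if ω((a,b),(c,d)) = a⬝d + b⬝c = 0 in ZMod 2. Thus abelian sets of spinors correspond exactly to isotropic sets of labels. -/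
open Matrix BigOperators

lemma sgn_injective : Function.Injective sgn := by
  intro s t
  fin_cases s <;> fin_cases t <;> norm_num [sgn, ZMod.val] <;> rfl

lemma pauli_zero_apply {p : ℕ} (a b : Fin p → ZMod 2) : pauli a b 0 a = 1 := by
  simp [pauli, sgn, dotp_eq_dotProduct]

lemma pauli_ne_zero {p : ℕ} (a b : Fin p → ZMod 2) : pauli a b ≠ 0 := fun h => by
  simpa [h] using pauli_zero_apply a b

theorem pauli_commute_iff_general {p : ℕ} (a b c d : Fin p → ZMod 2) :
    pauli a b * pauli c d = pauli c d * pauli a b ↔ omegaF (a, b) (c, d) = 0 := by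
  rw [pauli_mul_pauli, pauli_mul_pauli, add_comm c, add_comm d,
    (smul_left_injective ℂ (pauli_ne_zero _ _)).eq_iff, sgn_injective.eq_iff, omegaF,
    CharTwo.add_eq_zero, dotp_eq_dotProduct d, dotProduct_comm]
  rfl

/-- `σ(a,b)` and `σ(c,d)` commute iff `ω((a,b),(c,d)) = a⬝d + b⬝c = 0`
in `ZMod 2`: abelian sets of spinors correspond exactly to isotropic sets of labels. -/
theorem pauli_commute_iff {p : ℕ} (hp : 1 ≤ p) (a b c d : Fin p → ZMod 2) :
    pauli a b * pauli c d = pauli c d * pauli a b ↔ omegaF (a, b) (c, d) = 0 :=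
  pauli_commute_iff_general a b c d
end

section
/- Let V be a maximal isotropic subspace with respect to ω, let ψ₀ be a stabilizer state for V, and consider the syndrome state 𝕊ψ₀ = σ(e,f).mulVec (σ(c,d).mulVec ψ₀) obtained by applying an error spinor σ(e,f) after a codeword spinor σ(c,d). Then for every (a,b) ∈ V, the syndrome state is an eigenvector of σ(a,b): σ(a,b).mulVec (𝕊ψ₀) = (-1)^(ω((a,b),(c+e,d+f))) • 𝕊ψ₀. (Paper's Lemma 6: each syndrome state is an eigenvector of each spinor of the Cartanion.) -/
open Matrix BigOperators

lemma sgn_mul_self (t : ZMod 2) : sgn t * sgn t = 1 := by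
  rw [← sgn_add, CharTwo.add_self_eq_zero, sgn, ZMod.val_zero, pow_zero]

section Spinors

variable {p : ℕ}

lemma dotp_comm (a b : Fin p → ZMod 2) : dotp a b = dotp b a := by
  simp only [dotp, mul_comm]

lemma dotp_add_right (a x y : Fin p → ZMod 2) : dotp a (x + y) = dotp a x + dotp a y := by
  simp only [dotp, Pi.add_apply, mul_add, Finset.sum_add_distrib]

lemma omegaF_add_right (u v w : (Fin p → ZMod 2) × (Fin p → ZMod 2)) :
    omegaF u (v + w) = omegaF u v + omegaF u w := by
  simp only [omegaF, Prod.fst_add, Prod.snd_add, dotp_add_right]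
  abel

lemma pauli_mulVec_apply (a b : Fin p → ZMod 2) (ψ : (Fin p → ZMod 2) → ℂ) (x : Fin p → ZMod 2) :
    (pauli a b *ᵥ ψ) x = sgn (dotp b x) * ψ (x + a) := by
  simp [mulVec, dotProduct, pauli, ite_mul]

lemma pauli_mulVec_pauli_mulVec_comm (a b c d : Fin p → ZMod 2) (ψ : (Fin p → ZMod 2) → ℂ) :
    pauli a b *ᵥ (pauli c d *ᵥ ψ) = sgn (omegaF (a, b) (c, d)) • pauli c d *ᵥ (pauli a b *ᵥ ψ) := by
  funext x
  simp only [Pi.smul_apply, smul_eq_mul, pauli_mulVec_apply, omegaF, dotp_add_right, sgn_add,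
    dotp_comm a d, add_right_comm x a c]
  linear_combination -sgn (dotp b x) * sgn (dotp d x) * sgn (dotp d a) * ψ (x + c + a) *
    sgn_mul_self (dotp b c)

end Spinors

theorem syndrome_eigenvector_general {p : ℕ}
    (V : Submodule (ZMod 2) ((Fin p → ZMod 2) × (Fin p → ZMod 2)))
    (ψ₀ : (Fin p → ZMod 2) → ℂ)
    (hstab : ∀ u ∈ V, (pauli u.1 u.2).mulVec ψ₀ = ψ₀)
    (c d e f : Fin p → ZMod 2) :
    ∀ u ∈ V,
      (pauli u.1 u.2).mulVec ((pauli e f).mulVec ((pauli c d).mulVec ψ₀)) =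
        sgn (omegaF u (c + e, d + f)) •
          (pauli e f).mulVec ((pauli c d).mulVec ψ₀) := by
  rintro u hu
  rw [pauli_mulVec_pauli_mulVec_comm u.1 u.2 e f, pauli_mulVec_pauli_mulVec_comm u.1 u.2 c d,
    hstab u hu, mulVec_smul, smul_smul, ← Prod.mk_add_mk, omegaF_add_right, sgn_add, mul_comm]

/-- Paper's Lemma 6: For a stabilizer state `ψ₀` of a maximal isotropic
subspace `V` and a syndrome state `𝕊ψ₀ = σ(e,f).mulVec (σ(c,d).mulVec ψ₀)`, each
`(a,b) ∈ V` has `𝕊ψ₀` as an eigenvector: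
`σ(a,b).mulVec 𝕊ψ₀ = (-1)^(ω((a,b),(c+e,d+f))) • 𝕊ψ₀`. -/
theorem syndrome_eigenvector {p : ℕ} (hp : 1 ≤ p)
    (V : Submodule (ZMod 2) ((Fin p → ZMod 2) × (Fin p → ZMod 2)))
    (hV : IsMaxIsotropic V) (ψ₀ : (Fin p → ZMod 2) → ℂ) (hψ₀ : ψ₀ ≠ 0)
    (hstab : ∀ u ∈ V, (pauli u.1 u.2).mulVec ψ₀ = ψ₀)
    (c d e f : Fin p → ZMod 2) :
    ∀ u ∈ V,
      (pauli u.1 u.2).mulVec ((pauli e f).mulVec ((pauli c d).mulVec ψ₀)) =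
        sgn (omegaF u (c + e, d + f)) •
          (pauli e f).mulVec ((pauli c d).mulVec ψ₀) :=
  syndrome_eigenvector_general V ψ₀ hstab c d e f
end

section
/- Let V be a maximal isotropic subspace with respect to ω. If (c,d) and (e,f) lie in distinct cosets of V (i.e. (c+e, d+f) ∉ V), then there exists (a,b) ∈ V whose eigenvalue patterns on the two corresponding syndrome states differ: ω((a,b),(c,d)) ≠ ω((a,b),(e,f)) in ZMod 2. Hence measuring the spinors of the Cartanion distinguishes the syndromes belonging to different coset subspaces. (Used in the paper's Corollary 1 on correcting a given error set.) -/
open Matrix BigOperators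

/-! If `w` is `ω`-orthogonal to the maximal isotropic subspace `V`, then, `ω` being alternating,
`V ⊔ span {w}` is still isotropic, so by maximality `w ∈ V`. Were `ω(u, (c,d)) = ω(u, (e,f))`
for all `u ∈ V`, this would apply to `w = (c+e, d+f)`. -/

theorem LinearMap.BilinForm.isotropic_sup_span_singleton {R M : Type*} [CommRing R]
    [AddCommGroup M] [Module R M] {B : LinearMap.BilinForm R M} (hB : B.IsAlt)
    {V : Submodule R M} (hV : ∀ x ∈ V, ∀ y ∈ V, B x y = 0) {w : M}
    (hw : ∀ v ∈ V, B v w = 0) :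
    ∀ x ∈ V ⊔ R ∙ w, ∀ y ∈ V ⊔ R ∙ w, B x y = 0 := by
  intro x hx y hy
  obtain ⟨v₁, hv₁, _, hz₁, rfl⟩ := Submodule.mem_sup.1 hx
  obtain ⟨v₂, hv₂, _, hz₂, rfl⟩ := Submodule.mem_sup.1 hy
  obtain ⟨t₁, rfl⟩ := Submodule.mem_span_singleton.1 hz₁
  obtain ⟨t₂, rfl⟩ := Submodule.mem_span_singleton.1 hz₂
  have hwv : B w v₂ = 0 := (hB.eq_iff).1 (hw v₂ hv₂)
  simp [hV v₁ hv₁ v₂ hv₂, hw v₁ hv₁, hwv, hB.self_eq_zero w]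

def omegaForm (p : ℕ) : LinearMap.BilinForm (ZMod 2) ((Fin p → ZMod 2) × (Fin p → ZMod 2)) :=
  (dotProductBilin (ZMod 2) (ZMod 2)).compl₁₂ (LinearMap.fst _ _ _) (LinearMap.snd _ _ _) +
    (dotProductBilin (ZMod 2) (ZMod 2)).compl₁₂ (LinearMap.snd _ _ _) (LinearMap.fst _ _ _)

lemma omegaForm_apply {p : ℕ} (u v : (Fin p → ZMod 2) × (Fin p → ZMod 2)) :
    omegaForm p u v = omegaF u v := rfl

lemma omegaForm_isAlt (p : ℕ) : (omegaForm p).IsAlt := fun u => by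
  rw [omegaForm_apply, omegaF, dotp_eq_dotProduct, dotp_eq_dotProduct, dotProduct_comm u.2]
  exact CharTwo.add_self_eq_zero _

lemma IsMaxIsotropic.mem_of_forall_omegaF_eq_zero {p : ℕ}
    {V : Submodule (ZMod 2) ((Fin p → ZMod 2) × (Fin p → ZMod 2))} (hV : IsMaxIsotropic V)
    {w : (Fin p → ZMod 2) × (Fin p → ZMod 2)} (hw : ∀ v ∈ V, omegaF v w = 0) : w ∈ V := by
  have hiso : IsIsotropic (V ⊔ ZMod 2 ∙ w) :=
    LinearMap.BilinForm.isotropic_sup_span_singleton (omegaForm_isAlt p) hV.1 hw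
  rw [← hV.2 _ hiso le_sup_left]
  exact Submodule.mem_sup_right (Submodule.mem_span_singleton_self w)

theorem exists_distinguishing_spinor_general {p : ℕ}
    (V : Submodule (ZMod 2) ((Fin p → ZMod 2) × (Fin p → ZMod 2)))
    (hV : IsMaxIsotropic V) (c d e f : Fin p → ZMod 2)
    (hne : (c + e, d + f) ∉ V) :
    ∃ u ∈ V, omegaF u (c, d) ≠ omegaF u (e, f) := by
  by_contra! h
  refine hne (hV.mem_of_forall_omegaF_eq_zero fun u hu => ?_)
  have hsplit : ((c + e, d + f) : (Fin p → ZMod 2) × (Fin p → ZMod 2)) = (c, d) + (e, f) := rfl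
  rw [← omegaForm_apply, hsplit, map_add, omegaForm_apply, omegaForm_apply, h u hu]
  exact CharTwo.add_self_eq_zero _

/-- used in the paper's Corollary 1: If `(c,d)` and `(e,f)` lie in
distinct cosets of a maximal isotropic subspace `V`, then some `(a,b) ∈ V` has
different eigenvalue patterns on the two syndromes:
`ω((a,b),(c,d)) ≠ ω((a,b),(e,f))`. -/
theorem exists_distinguishing_spinor {p : ℕ} (hp : 1 ≤ p)
    (V : Submodule (ZMod 2) ((Fin p → ZMod 2) × (Fin p → ZMod 2)))
    (hV : IsMaxIsotropic V) (c d e f : Fin p → ZMod 2)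
    (hne : (c + e, d + f) ∉ V) :
    ∃ u ∈ V, omegaF u (c, d) ≠ omegaF u (e, f) :=
  exists_distinguishing_spinor_general V hV c d e f hne
end
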